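/- arXiv:2307.05442 — 6 statements merged into one kernel-verified Lean document; each statement's English description precedes it below -/
import Mathlib

section
/- Let p and z be points in ℝ² and let ρ be a real number with ρ ≥ ‖z − p‖₂. Then for every angle θ ∈ ℝ there exist a real number b ≥ 0 and a point v = p +ب·(cos θ, sin θ) — i.e. v = (p₁ + b cos θ, p₂ + b sin θ) — such that ‖v − p‖₂ + ‖v − z‖₂ = ρ. (In the paper's terminology: every fake path whose time-of-arrival τ̃ satisfies c·τ̃ ≥ ‖z − p‖₂ is geometrically feasible, i.e. there exists a scatterer location v that is mapped, via the TOA equation c·τ̃ = ‖v − p‖₂ + ‖v − z‖₂ and the AOD equation that v lies on the ray from p in direction θ, to the prescribed TOA–AOD pair; hence Eve cannot distinguish such a fake path from a true one.) -/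
/-- **Proposition 1 (geometrical feasibility of fake paths).**
If `ρ ≥ ‖z - p‖` then for every angle `θ` there exist `b ≥ 0` and a scatterer location
`v = p + b • (cos θ, sin θ)` such that `‖v - p‖ + ‖v - z‖ = ρ`. -/
theorem fake_path_geometrically_feasible
    (p z : EuclideanSpace ℝ (Fin 2)) (ρ : ℝ) (hρ : ρ ≥ ‖z - p‖) (θ : ℝ) :
    ∃ (b : ℝ) (v : EuclideanSpace ℝ (Fin 2)),
      0 ≤ b ∧
      v 0 = p 0 + b * Real.cos θ ∧
      v 1 = p 1 + b * Real.sin θ ∧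
      ‖v - p‖ + ‖v - z‖ = ρ := by
  set u : EuclideanSpace ℝ (Fin 2) := (WithLp.equiv 2 (Fin 2 → ℝ)).symm ![Real.cos θ, Real.sin θ]
    with hu
  have hu0 : u 0 = Real.cos θ := rfl
  have hu1 : u 1 = Real.sin θ := rfl
  have hnu : ‖u‖ = 1 := by
    rw [EuclideanSpace.norm_eq]
    simp [hu, Fin.sum_univ_two]
  set f : ℝ → ℝ := fun b => b + ‖p + b • u - z‖ with hf
  have hρ0 : (0 : ℝ) ≤ ρ := le_trans (norm_nonneg _) hρ
  have hcont : ContinuousOn f (Set.Icc 0 ρ) := by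
    apply Continuous.continuousOn
    exact continuous_id.add ((continuous_const.add (continuous_id.smul continuous_const)).sub
      continuous_const).norm
  have hf0 : f 0 = ‖z - p‖ := by simp [hf, norm_sub_rev]
  have hfρ : ρ ≤ f ρ := by
    simp only [hf]
    nlinarith [norm_nonneg (p + ρ • u - z)]
  have hmem : ρ ∈ Set.Icc (f 0) (f ρ) := ⟨by rw [hf0]; exact hρ, hfρ⟩
  obtain ⟨b, hb, hfb⟩ := intermediate_value_Icc hρ0 hcont hmem
  refine ⟨b, p + b • u, hb.1, ?_, ?_, ?_⟩
  · simp [hu0]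
  · simp [hu1]
  · have h1 : ‖(p + b • u) - p‖ = b := by
      simp [norm_smul, hnu, abs_of_nonneg hb.1]
    rw [h1]
    simpa [hf] using hfb
end

section
/- Let p, z ∈ ℝ², let u ∈ ℝ² be a unit vector (‖u‖₂ = 1), and let ρ ∈ ℝ satisfy ρ > ‖z − p‖₂. Write ż := z − p and define b := (ρ² − ‖ż‖₂²) / (2(ρ − ⟨ż, u⟩)), where ⟨·,·⟩ is the Euclidean inner product. Then: (i) the denominator is strictly positive, ρ − ⟨ż, u⟩ > 0; (ii) 0 < b ≤ ρ; and (iii) ‖p + b·u − z‖₂ = ρ − b, i.e. the point v := p + b·u satisfies ‖v − p‖₂ + ‖v − z‖₂ = ρ. -/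
open scoped RealInnerProductSpace

/-- **Equation (30) in the proof of Proposition 1.**
For `ρ > ‖z - p‖` and a unit direction `u`, the explicit scatterer distance
`b = (ρ² − ‖z−p‖²) / (2(ρ − ⟪z−p, u⟫))` satisfies:
(i) the denominator is strictly positive; (ii) `0 < b ≤ ρ`;
(iii) the point `v = p + b • u` satisfies `‖v − z‖ = ρ − b`. -/
theorem scatterer_distance_choice
    (p z u : EuclideanSpace ℝ (Fin 2)) (hu : ‖u‖ = 1) (ρ : ℝ) (hρ : ρ > ‖z - p‖) :
    0 < ρ - ⟪z - p, u⟫ ∧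
    (0 < (ρ ^ 2 - ‖z - p‖ ^ 2) / (2 * (ρ - ⟪z - p, u⟫)) ∧
      (ρ ^ 2 - ‖z - p‖ ^ 2) / (2 * (ρ - ⟪z - p, u⟫)) ≤ ρ) ∧
    ‖p + ((ρ ^ 2 - ‖z - p‖ ^ 2) / (2 * (ρ - ⟪z - p, u⟫))) • u - z‖
      = ρ - (ρ ^ 2 - ‖z - p‖ ^ 2) / (2 * (ρ - ⟪z - p, u⟫)) := by
  set w := z - p with hw
  have hinner : ⟪w, u⟫ ≤ ‖w‖ := by
    calc ⟪w, u⟫ ≤ ‖w‖ * ‖u‖ := real_inner_le_norm w u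
    _ = ‖w‖ := by rw [hu, mul_one]
  have hwn : 0 ≤ ‖w‖ := norm_nonneg w
  have hρ0 : 0 < ρ := lt_of_le_of_lt hwn hρ
  have hden : 0 < ρ - ⟪w, u⟫ := by linarith
  set b := (ρ ^ 2 - ‖w‖ ^ 2) / (2 * (ρ - ⟪w, u⟫)) with hb
  have hnum : 0 < ρ ^ 2 - ‖w‖ ^ 2 := by nlinarith
  have hbpos : 0 < b := div_pos hnum (by linarith)
  have hkey : 2 * b * (ρ - ⟪w, u⟫) = ρ ^ 2 - ‖w‖ ^ 2 := by
    rw [mul_comm 2 b, mul_assoc, hb, div_mul_cancel₀ _ (by positivity)]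
  have hble : b ≤ ρ := by nlinarith [sq_nonneg (ρ - ‖w‖)]
  refine ⟨hden, ⟨hbpos, hble⟩, ?_⟩
  have hrw : p + b • u - z = b • u - w := by
    rw [hw]; abel
  have hsq : ‖b • u - w‖ ^ 2 = (ρ - b) ^ 2 := by
    rw [norm_sub_sq_real, norm_smul, real_inner_smul_left, hu,
      real_inner_comm]
    simp only [Real.norm_eq_abs]
    rw [abs_of_pos hbpos]
    nlinarith
  have h1 : 0 ≤ ‖b • u - w‖ := norm_nonneg _
  have h2 : 0 ≤ ρ - b := by linarith
  rw [hrw]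
  calc ‖b • u - w‖ = Real.sqrt (‖b • u - w‖ ^ 2) := (Real.sqrt_sq h1).symm
    _ = Real.sqrt ((ρ - b) ^ 2) := by rw [hsq]
    _ = ρ - b := Real.sqrt_sq h2
end

section
/- Let p, z, v ∈ ℝ², let θ̃ ∈ ℝ, and let δ > 0. Set ρ̃ := ‖z − v‖₂ + ‖p − v‖₂ + δ. Then there exist a real number b ≥ 0 and a point ṽ = p + b·(cos θ̃, sin θ̃) such that ‖ṽ − p‖₂ + ‖ṽ − z‖₂ = ρ̃. (That is: if a true path through scatterer v has TOA τ with c·τ = ‖z − v‖₂ + ‖p − v‖₂, then any fake path obtained by adding a strictly positive extra delay δ/c to τ, with an arbitrary departure angle θ̃, is geometrically feasible and hence indistinguishable from a true path by Eve.) -/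
/-- **Corollary 2.** If a true path goes through a scatterer `v`, then any fake path
obtained by adding a strictly positive extra path length `δ` to its two-hop length
`‖z - v‖ + ‖p - v‖`, with an arbitrary departure angle `θ̃`, is geometrically feasible:
there exist `b ≥ 0` and `ṽ = p + b • (cos θ̃, sin θ̃)` with
`‖ṽ - p‖ + ‖ṽ - z‖ = ‖z - v‖ + ‖p - v‖ + δ`. -/
theorem fake_path_of_positive_extra_delay_feasible
    (p z v : EuclideanSpace ℝ (Fin 2)) (θt : ℝ) (δ : ℝ) (hδ : 0 < δ) :
    ∃ (b : ℝ) (vt : EuclideanSpace ℝ (Fin 2)),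
      0 ≤ b ∧
      vt 0 = p 0 + b * Real.cos θt ∧
      vt 1 = p 1 + b * Real.sin θt ∧
      ‖vt - p‖ + ‖vt - z‖ = ‖z - v‖ + ‖p - v‖ + δ := by
  set u : EuclideanSpace ℝ (Fin 2) :=
    (WithLp.equiv 2 (Fin 2 → ℝ)).symm ![Real.cos θt, Real.sin θt] with hu
  have hu0 : u 0 = Real.cos θt := rfl
  have hu1 : u 1 = Real.sin θt := rfl
  have hunorm : ‖u‖ = 1 := by
    rw [EuclideanSpace.norm_eq]
    have : ∑ i : Fin 2, ‖u i‖ ^ 2 = Real.cos θt ^ 2 + Real.sin θt ^ 2 := by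
      simp [Fin.sum_univ_two, hu0, hu1, Real.norm_eq_abs, sq_abs]
    rw [this, Real.cos_sq_add_sin_sq, Real.sqrt_one]
  set ρ : ℝ := ‖z - v‖ + ‖p - v‖ + δ with hρ
  set f : ℝ → ℝ := fun b => b + ‖p + b • u - z‖ with hf
  have hcont : Continuous f := by
    apply continuous_id.add
    exact (continuous_const.add (continuous_id.smul continuous_const)).sub
      continuous_const |>.norm
  have hf0 : f 0 ≤ ρ := by
    have htri : ‖p - z‖ ≤ ‖p - v‖ + ‖v - z‖ := norm_sub_le_norm_sub_add_norm_sub p v z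
    have : ‖v - z‖ = ‖z - v‖ := norm_sub_rev v z
    simp only [hf, zero_smul, add_zero]
    linarith
  have hρ0 : 0 ≤ ρ := by positivity
  have hfρ : ρ ≤ f ρ := by
    simp only [hf]
    have := norm_nonneg (p + ρ • u - z)
    linarith
  have hIVT := intermediate_value_Icc hρ0 hcont.continuousOn
  have hmem : ρ ∈ Set.Icc (f 0) (f ρ) := ⟨hf0, hfρ⟩
  obtain ⟨b, hb, hfb⟩ := hIVT hmem
  refine ⟨b, p + b • u, hb.1, ?_, ?_, ?_⟩
  · simp [hu0]
  · simp [hu1]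
  · have h1 : ‖p + b • u - p‖ = b := by
      have : p + b • u - p = b • u := by abel
      rw [this, norm_smul, hunorm, mul_one, Real.norm_eq_abs, abs_of_nonneg hb.1]
    rw [h1]
    simpa [hf] using hfb
end

section
/- With Γ = Γ(γ̃, θ̃, x, y) the 4×4 complex matrix defined below (depending also on the fixed data γ, θ, Λ, N, N_t), the entrywise real part Re Γ satisfies: det(Re Γ(γ̃, θ̃, x, y)) → 0 as (γ̃, θ̃, x, y) → (γ, θ, 0, 0); moreover, at the limit point (γ̃, θ̃, x, y) = (γ, θ, 0, 0) the third and fourth rows of Re Γ coincide with its first and second rows, so Re Γ(γ, θ, 0, 0) has rank at most 2 and determinant 0. -/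
open Real

noncomputable section

/-- `O₁ = N(N−1)(2N−1)/6`. -/
def O₁ (N : ℕ) : ℝ := (N : ℝ) * ((N : ℝ) - 1) * (2 * (N : ℝ) - 1) / 6
/-- `O₂ = N(N−1)/2`. -/
def O₂ (N : ℕ) : ℝ := (N : ℝ) * ((N : ℝ) - 1) / 2
/-- `O₃ = (N_t−1)/2`. -/
def O₃ (Nt : ℕ) : ℝ := ((Nt : ℝ) - 1) / 2
/-- `O₄ = (N_t−1)(2N_t−1)/6`. -/
def O₄ (Nt : ℕ) : ℝ := ((Nt : ℝ) - 1) * (2 * (Nt : ℝ) - 1) / 6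
/-- `O₅ = N`. -/
def O₅ (N : ℕ) : ℝ := (N : ℝ)
/-- `O₆ = 1`. -/
def O₆ (Nt : ℕ) : ℝ := 1

/-- `M₁(y) = Σ_{n<N} n² e^{−2πiny}`. -/
def M₁ (N : ℕ) (y : ℝ) : ℂ :=
  ∑ n ∈ Finset.range N, (n : ℂ) ^ 2 * Complex.exp (-(2 * (π : ℂ) * Complex.I * n * y))
/-- `M₂(y) = Σ_{n<N} n e^{−2πiny}`. -/
def M₂ (N : ℕ) (y : ℝ) : ℂ :=
  ∑ n ∈ Finset.range N, (n : ℂ) * Complex.exp (-(2 * (π : ℂ) * Complex.I * n * y))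
/-- `M₃(x) = (1/N_t) Σ_{m<N_t} m e^{2πimx}`. -/
def M₃ (Nt : ℕ) (x : ℝ) : ℂ :=
  (Nt : ℂ)⁻¹ * ∑ m ∈ Finset.range Nt, (m : ℂ) * Complex.exp (2 * (π : ℂ) * Complex.I * m * x)
/-- `M₄(x) = (1/N_t) Σ_{m<N_t} m² e^{2πimx}`. -/
def M₄ (Nt : ℕ) (x : ℝ) : ℂ :=
  (Nt : ℂ)⁻¹ * ∑ m ∈ Finset.range Nt, (m : ℂ) ^ 2 * Complex.exp (2 * (π : ℂ) * Complex.I * m * x)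
/-- `M₅(y) = Σ_{n<N} e^{−2πiny}`. -/
def M₅ (N : ℕ) (y : ℝ) : ℂ :=
  ∑ n ∈ Finset.range N, Complex.exp (-(2 * (π : ℂ) * Complex.I * n * y))
/-- `M₆(x) = (1/N_t) Σ_{m<N_t} e^{2πimx}`. -/
def M₆ (Nt : ℕ) (x : ℝ) : ℂ :=
  (Nt : ℂ)⁻¹ * ∑ m ∈ Finset.range Nt, Complex.exp (2 * (π : ℂ) * Complex.I * m * x)

/-- The 4×4 matrix `Γ(γ̃, θ̃, x, y)` of Equation (22) of the paper (depending on the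
fixed data `N`, `N_t`, `Λ`, `γ`, `θ`), whose scaled entrywise real part is the
asymptotic Fisher information matrix `J̆^{(ζ_k)}` of the TOA–AOD parameters of one
true path and its fake copy. -/
def Γmat (N Nt : ℕ) (Λ : ℝ) (γ : ℂ) (θ : ℝ) (γt : ℂ) (θt x y : ℝ) :
    Matrix (Fin 4) (Fin 4) ℂ :=
  !![((O₁ N * O₆ Nt * ‖γ‖ ^ 2 : ℝ) : ℂ),
     ((-(O₂ N * O₃ Nt * ‖γ‖ ^ 2 * Real.cos θ / Λ) : ℝ) : ℂ),
     M₁ N y * M₆ Nt x * (starRingEnd ℂ) γ * γt,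
     -(M₂ N y * M₃ Nt x * (starRingEnd ℂ) γ * γt * ((Real.cos θt : ℝ) : ℂ) / ((Λ : ℝ) : ℂ));
     ((-(O₂ N * O₃ Nt * ‖γ‖ ^ 2 * Real.cos θ / Λ) : ℝ) : ℂ),
     ((O₄ Nt * O₅ N * ‖γ‖ ^ 2 * Real.cos θ ^ 2 / Λ ^ 2 : ℝ) : ℂ),
     -(M₂ N y * M₃ Nt x * (starRingEnd ℂ) γ * γt * ((Real.cos θ : ℝ) : ℂ) / ((Λ : ℝ) : ℂ)),
     M₄ Nt x * M₅ N y * (starRingEnd ℂ) γ * γt * ((Real.cos θ * Real.cos θt : ℝ) : ℂ) / ((Λ ^ 2 : ℝ) : ℂ);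
     (starRingEnd ℂ) (M₁ N y * M₆ Nt x * (starRingEnd ℂ) γ * γt),
     (starRingEnd ℂ) (-(M₂ N y * M₃ Nt x * (starRingEnd ℂ) γ * γt * ((Real.cos θ : ℝ) : ℂ) / ((Λ : ℝ) : ℂ))),
     ((O₁ N * O₆ Nt * ‖γt‖ ^ 2 : ℝ) : ℂ),
     ((-(O₂ N * O₃ Nt * ‖γt‖ ^ 2 * Real.cos θt / Λ) : ℝ) : ℂ);
     (starRingEnd ℂ) (-(M₂ N y * M₃ Nt x * (starRingEnd ℂ) γ * γt * ((Real.cos θt : ℝ) : ℂ) / ((Λ : ℝ) : ℂ))),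
     (starRingEnd ℂ) (M₄ Nt x * M₅ N y * (starRingEnd ℂ) γ * γt * ((Real.cos θ * Real.cos θt : ℝ) : ℂ) / ((Λ ^ 2 : ℝ) : ℂ)),
     ((-(O₂ N * O₃ Nt * ‖γt‖ ^ 2 * Real.cos θt / Λ) : ℝ) : ℂ),
     ((O₄ Nt * O₅ N * ‖γt‖ ^ 2 * Real.cos θt ^ 2 / Λ ^ 2 : ℝ) : ℂ)]

/-! At the true path `(γ̃, θ̃, x, y) = (γ, θ, 0, 0)` every exponential in the sums `Mᵢ` equals `1`,
so each `Mᵢ` collapses to the matching `Oᵢ` (the closed forms of `∑ n` and `∑ n²`), and `Γ`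
becomes the real matrix `[[B, B], [B, B]]` with `B` its upper left `2 × 2` block. Its rows repeat
with period two, whence rank at most two and determinant zero; continuity of `Γ` in
`(γ̃, θ̃, x, y)` then carries the vanishing determinant to the limit. -/

theorem Finset.sum_range_natCast {K : Type*} [Field K] [CharZero K] (N : ℕ) :
    ∑ n ∈ Finset.range N, (n : K) = N * (N - 1) / 2 := by
  induction N with
  | zero => simp
  | succ n ih => rw [Finset.sum_range_succ, ih]; push_cast; ring

theorem Finset.sum_range_natCast_sq {K : Type*} [Field K] [CharZero K] (N : ℕ) :
    ∑ n ∈ Finset.range N, (n : K) ^ 2 = N * (N - 1) * (2 * N - 1) / 6 := by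
  induction N with
  | zero => simp
  | succ n ih => rw [Finset.sum_range_succ, ih]; push_cast; ring

theorem Matrix.rank_le_card_of_row_eq_row_comp {m n k R : Type*} [Fintype m] [Fintype n]
    [Fintype k] [Field R] (A : Matrix m n R) (f : m → k) (g : k → m)
    (h : ∀ i, A (g (f i)) = A i) : A.rank ≤ Fintype.card k := by
  rw [rank_eq_finrank_span_row]
  calc Module.finrank R (Submodule.span R (Set.range A.row))
      ≤ Module.finrank R (Submodule.span R (Set.range (A.row ∘ g))) :=
        Submodule.finrank_mono <| Submodule.span_mono <| by
          rintro _ ⟨i, rfl⟩; exact ⟨f i, h i⟩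
    _ ≤ Fintype.card k := finrank_range_le_card _

lemma M₁_zero (N : ℕ) : M₁ N 0 = O₁ N := by
  simp [M₁, O₁, Finset.sum_range_natCast_sq]

lemma M₂_zero (N : ℕ) : M₂ N 0 = O₂ N := by
  simp [M₂, O₂, Finset.sum_range_natCast]

lemma M₃_zero {Nt : ℕ} (hNt : Nt ≠ 0) : M₃ Nt 0 = O₃ Nt := by
  simp only [M₃, Complex.ofReal_zero, mul_zero, Complex.exp_zero, mul_one,
    Finset.sum_range_natCast, O₃]
  push_cast
  field_simp

lemma M₄_zero {Nt : ℕ} (hNt : Nt ≠ 0) : M₄ Nt 0 = O₄ Nt := by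
  simp only [M₄, Complex.ofReal_zero, mul_zero, Complex.exp_zero, mul_one,
    Finset.sum_range_natCast_sq, O₄]
  push_cast
  field_simp

lemma M₅_zero (N : ℕ) : M₅ N 0 = O₅ N := by
  simp [M₅, O₅]

lemma M₆_zero {Nt : ℕ} (hNt : Nt ≠ 0) : M₆ Nt 0 = O₆ Nt := by
  simp [M₆, O₆, hNt]

theorem continuous_Γmat (N Nt : ℕ) (Λ : ℝ) (γ : ℂ) (θ : ℝ) :
    Continuous fun q : ℂ × ℝ × ℝ × ℝ => Γmat N Nt Λ γ θ q.1 q.2.1 q.2.2.1 q.2.2.2 := by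
  unfold Γmat M₁ M₂ M₃ M₄ M₅ M₆
  fun_prop

theorem Γmat_map_re_at_true_path (N Nt : ℕ) (hNt : Nt ≠ 0) (Λ : ℝ) (γ : ℂ) (θ : ℝ) :
    (Γmat N Nt Λ γ θ γ θ 0 0).map Complex.re =
      !![O₁ N * O₆ Nt * ‖γ‖ ^ 2, -(O₂ N * O₃ Nt * ‖γ‖ ^ 2 * cos θ / Λ),
          O₁ N * O₆ Nt * ‖γ‖ ^ 2, -(O₂ N * O₃ Nt * ‖γ‖ ^ 2 * cos θ / Λ);
        -(O₂ N * O₃ Nt * ‖γ‖ ^ 2 * cos θ / Λ), O₄ Nt * O₅ N * ‖γ‖ ^ 2 * cos θ ^ 2 / Λ ^ 2,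
          -(O₂ N * O₃ Nt * ‖γ‖ ^ 2 * cos θ / Λ), O₄ Nt * O₅ N * ‖γ‖ ^ 2 * cos θ ^ 2 / Λ ^ 2;
        O₁ N * O₆ Nt * ‖γ‖ ^ 2, -(O₂ N * O₃ Nt * ‖γ‖ ^ 2 * cos θ / Λ),
          O₁ N * O₆ Nt * ‖γ‖ ^ 2, -(O₂ N * O₃ Nt * ‖γ‖ ^ 2 * cos θ / Λ);
        -(O₂ N * O₃ Nt * ‖γ‖ ^ 2 * cos θ / Λ), O₄ Nt * O₅ N * ‖γ‖ ^ 2 * cos θ ^ 2 / Λ ^ 2,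
          -(O₂ N * O₃ Nt * ‖γ‖ ^ 2 * cos θ / Λ), O₄ Nt * O₅ N * ‖γ‖ ^ 2 * cos θ ^ 2 / Λ ^ 2] := by
  ext i j
  fin_cases i <;> fin_cases j <;>
    simp [Γmat, M₁_zero, M₂_zero, M₃_zero hNt, M₄_zero hNt, M₅_zero, M₆_zero hNt,
      -Complex.ofReal_pow, Complex.sq_norm, Complex.normSq_apply, Complex.cos_ofReal_re] <;>
    ring

theorem asymptotic_fim_tends_to_singular_general
    (N Nt : ℕ) (hNt : 1 ≤ Nt) (Λ : ℝ)
    (γ : ℂ) (θ : ℝ) :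
    Filter.Tendsto
      (fun q : ℂ × ℝ × ℝ × ℝ =>
        ((Γmat N Nt Λ γ θ q.1 q.2.1 q.2.2.1 q.2.2.2).map Complex.re).det)
      (nhds (γ, θ, 0, 0)) (nhds 0) ∧
    (∀ j, ((Γmat N Nt Λ γ θ γ θ 0 0).map Complex.re) 2 j
        = ((Γmat N Nt Λ γ θ γ θ 0 0).map Complex.re) 0 j) ∧
    (∀ j, ((Γmat N Nt Λ γ θ γ θ 0 0).map Complex.re) 3 j
        = ((Γmat N Nt Λ γ θ γ θ 0 0).map Complex.re) 1 j) ∧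
    ((Γmat N Nt Λ γ θ γ θ 0 0).map Complex.re).rank ≤ 2 ∧
    ((Γmat N Nt Λ γ θ γ θ 0 0).map Complex.re).det = 0 := by
  have hlim := ((continuous_Γmat N Nt Λ γ θ).matrix_map Complex.continuous_re).matrix_det.tendsto
    (γ, θ, 0, 0)
  have hA := Γmat_map_re_at_true_path N Nt (Nat.one_le_iff_ne_zero.mp hNt) Λ γ θ
  set A := (Γmat N Nt Λ γ θ γ θ 0 0).map Complex.re
  have row_two : ∀ j, A 2 j = A 0 j := by rw [hA]; intro j; fin_cases j <;> rfl
  have row_three : ∀ j, A 3 j = A 1 j := by rw [hA]; intro j; fin_cases j <;> rfl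
  have hdet : A.det = 0 := Matrix.det_zero_of_row_eq (by decide) (funext row_two)
  have hrank : A.rank ≤ 2 := by
    refine A.rank_le_card_of_row_eq_row_comp ![0, 1, 0, 1] ![0, 1] fun i => ?_
    fin_cases i
    exacts [rfl, rfl, (funext row_two).symm, (funext row_three).symm]
  rw [hdet] at hlim
  exact ⟨hlim, row_two, row_three, hrank, hdet⟩

/-- **Proposition 2.** The determinant of the entrywise real part of `Γ` tends to `0`
as `(γ̃, θ̃, x, y) → (γ, θ, 0, 0)`; at the limit point the third and fourth rows of
`Re Γ` coincide with the first and second rows, so `Re Γ(γ, θ, 0, 0)` has rank at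
most `2` and determinant `0`. -/
theorem asymptotic_fim_tends_to_singular
    (N Nt : ℕ) (hN : 1 ≤ N) (hNt : 1 ≤ Nt) (Λ : ℝ) (hΛ : 0 < Λ)
    (γ : ℂ) (θ : ℝ) (hθ : θ ∈ Set.Ioo (-(π / 2)) (π / 2)) :
    Filter.Tendsto
      (fun q : ℂ × ℝ × ℝ × ℝ =>
        ((Γmat N Nt Λ γ θ q.1 q.2.1 q.2.2.1 q.2.2.2).map Complex.re).det)
      (nhds (γ, θ, 0, 0)) (nhds 0) ∧
    (∀ j, ((Γmat N Nt Λ γ θ γ θ 0 0).map Complex.re) 2 j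
        = ((Γmat N Nt Λ γ θ γ θ 0 0).map Complex.re) 0 j) ∧
    (∀ j, ((Γmat N Nt Λ γ θ γ θ 0 0).map Complex.re) 3 j
        = ((Γmat N Nt Λ γ θ γ θ 0 0).map Complex.re) 1 j) ∧
    ((Γmat N Nt Λ γ θ γ θ 0 0).map Complex.re).rank ≤ 2 ∧
    ((Γmat N Nt Λ γ θ γ θ 0 0).map Complex.re).det = 0 :=
  asymptotic_fim_tends_to_singular_general N Nt hNt Λ γ θ

end
end

section
/- With Γ = Γ(γ̃, θ̃, x, y) the 4×4 complex matrix defined below, suppose γ̃ = γ (i.e. the fake-path channel coefficient equals the true one, δ_γ = 0). Then the determinant of the entrywise real part factorizes as det(Re Γ) = |γ|⁸ · cos²θ · cos²θ̃ · Λ⁻⁴ · D₁ · D₂, where D₁ = (O₁O₆ + Re(M₁(y)M₆(x)))·(O₄O₅ + Re(M₄(x)M₅(y))) − (O₂O₃ + Re(M₂(y)M₃(x)))² and D₂ = (O₁O₆ − Re(M₁(y)M₆(x)))·(O₄O₅ − Re(M₄(x)M₅(y))) − (O₂O₃ − Re(M₂(y)M₃(x)))². -/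
open Real

noncomputable section

/-
With `γ̃ = γ` every entry of `Re Γ` carries the factor `|γ|²`, since `Re (w · conj γ · γ) = |γ|² Re w`,
and `Re Γ = |γ|² D [[A, B], [B, A]] D` with `D = diag(1, cos θ/Λ, 1, cos θ̃/Λ)`. The shears
`[[I, 0], [-I, I]]` and `[[I, 0], [I, I]]` turn `[[A, B], [B, A]]` into `[[A + B, B], [0, A - B]]`,
so its determinant is `det (A + B) · det (A - B) = D₁ D₂`.
-/

open Matrix

namespace Matrix

variable {n R : Type*} [Fintype n] [DecidableEq n] [CommRing R]

theorem det_fromBlocks_eq_det_add_mul_det_sub (A B : Matrix n n R) :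
    (fromBlocks A B B A).det = (A + B).det * (A - B).det := by
  have shear : fromBlocks 1 0 (-1) 1 * fromBlocks A B B A * fromBlocks 1 0 1 1
      = fromBlocks (A + B) B 0 (A - B) := by
    simp [fromBlocks_multiply, neg_add_eq_sub]
  have := congrArg det shear
  rwa [det_mul, det_mul, det_fromBlocks_zero₁₂, det_fromBlocks_zero₁₂, det_fromBlocks_zero₂₁,
    det_one, one_mul, one_mul, mul_one] at this

end Matrix

lemma Complex.re_mul_conj_mul_self (w γ : ℂ) : (w * starRingEnd ℂ γ * γ).re = w.re * ‖γ‖ ^ 2 := by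
  rw [mul_assoc, Complex.conj_mul', ← Complex.ofReal_pow, Complex.re_mul_ofReal]

def ΓblockA (N Nt : ℕ) : Matrix (Fin 2) (Fin 2) ℝ :=
  !![O₁ N * O₆ Nt, -(O₂ N * O₃ Nt); -(O₂ N * O₃ Nt), O₄ Nt * O₅ N]

def ΓblockB (N Nt : ℕ) (x y : ℝ) : Matrix (Fin 2) (Fin 2) ℝ :=
  !![(M₁ N y * M₆ Nt x).re, -(M₂ N y * M₃ Nt x).re;
     -(M₂ N y * M₃ Nt x).re, (M₄ Nt x * M₅ N y).re]

def Γscaling (Λ θ θt : ℝ) : Fin 2 ⊕ Fin 2 → ℝ :=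
  Sum.elim ![1, Real.cos θ / Λ] ![1, Real.cos θt / Λ]

lemma submatrix_map_re_Γmat_self (N Nt : ℕ) (Λ : ℝ) (γ : ℂ) (θ θt x y : ℝ) :
    ((Γmat N Nt Λ γ θ γ θt x y).map Complex.re).submatrix finSumFinEquiv finSumFinEquiv =
      ‖γ‖ ^ 2 • (diagonal (Γscaling Λ θ θt) *
        fromBlocks (ΓblockA N Nt) (ΓblockB N Nt x y) (ΓblockB N Nt x y) (ΓblockA N Nt) *
        diagonal (Γscaling Λ θ θt)) := by
  -- `conj` is kept outside the entries so that `Complex.conj_re` can remove it; `(m := 2) (n := 2)`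
  -- is needed because unification cannot split `Fin 4` as `Fin (m + n)`.
  ext (i | i) (j | j) <;> fin_cases i <;> fin_cases j <;>
    simp [Γmat, ΓblockA, ΓblockB, Γscaling, finSumFinEquiv_apply_left (m := 2) (n := 2),
      finSumFinEquiv_apply_right (m := 2) (n := 2), Complex.re_mul_ofReal,
      Complex.re_mul_conj_mul_self, -map_mul, -map_neg, -map_div₀, -Complex.mul_re,
      -Complex.ofReal_cos, -Complex.ofReal_mul, -Complex.ofReal_pow] <;>
    ring

theorem det_re_gamma_factorization_general
    (N Nt : ℕ) (Λ : ℝ)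
    (γ : ℂ) (θ θt : ℝ)
    (x y : ℝ) :
    ((Γmat N Nt Λ γ θ γ θt x y).map Complex.re).det
      = ‖γ‖ ^ 8 * Real.cos θ ^ 2 * Real.cos θt ^ 2 * (Λ ^ 4)⁻¹ *
        ((O₁ N * O₆ Nt + (M₁ N y * M₆ Nt x).re) *
            (O₄ Nt * O₅ N + (M₄ Nt x * M₅ N y).re)
          - (O₂ N * O₃ Nt + (M₂ N y * M₃ Nt x).re) ^ 2) *
        ((O₁ N * O₆ Nt - (M₁ N y * M₆ Nt x).re) *
            (O₄ Nt * O₅ N - (M₄ Nt x * M₅ N y).re)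
          - (O₂ N * O₃ Nt - (M₂ N y * M₃ Nt x).re) ^ 2) := by
  rw [← det_submatrix_equiv_self (finSumFinEquiv (m := 2) (n := 2)),
    submatrix_map_re_Γmat_self, det_smul, det_mul, det_mul, det_diagonal,
    det_fromBlocks_eq_det_add_mul_det_sub]
  simp [det_fin_two_of, ΓblockA, ΓblockB, Γscaling]
  ring

/-- **Determinant factorization underlying Proposition 3 (Equation (25)).**
When the fake channel coefficient equals the true one (`γ̃ = γ`, i.e. `δ_γ = 0`),
the determinant of the entrywise real part of `Γ` factorizes as
`det(Re Γ) = |γ|⁸ cos²θ cos²θ̃ Λ⁻⁴ D₁ D₂`. -/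
theorem det_re_gamma_factorization
    (N Nt : ℕ) (hN : 1 ≤ N) (hNt : 1 ≤ Nt) (Λ : ℝ) (hΛ : 0 < Λ)
    (γ : ℂ) (θ θt : ℝ)
    (hθ : θ ∈ Set.Ioo (-(π / 2)) (π / 2)) (hθt : θt ∈ Set.Ioo (-(π / 2)) (π / 2))
    (x y : ℝ) :
    ((Γmat N Nt Λ γ θ γ θt x y).map Complex.re).det
      = ‖γ‖ ^ 8 * Real.cos θ ^ 2 * Real.cos θt ^ 2 * (Λ ^ 4)⁻¹ *
        ((O₁ N * O₆ Nt + (M₁ N y * M₆ Nt x).re) *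
            (O₄ Nt * O₅ N + (M₄ Nt x * M₅ N y).re)
          - (O₂ N * O₃ Nt + (M₂ N y * M₃ Nt x).re) ^ 2) *
        ((O₁ N * O₆ Nt - (M₁ N y * M₆ Nt x).re) *
            (O₄ Nt * O₅ N - (M₄ Nt x * M₅ N y).re)
          - (O₂ N * O₃ Nt - (M₂ N y * M₃ Nt x).re) ^ 2) :=
  det_re_gamma_factorization_general N Nt Λ γ θ θt x y

end
end

section
/- Fix integers N ≥ 1 and N_t ≥ 1 and real numbers x, y with y ≥ 0 and x ≥ (N − 1)·y. Then O₄O₅ − Re(M₄(x)·M₅(y)) ≤ (3π/4)·N·N_t·(N_t−1)²·x − (π/4)·N(N−1)(N_t−1)(2N_t−1)·y. -/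
/-!
Both sides are double sums over `m < N_t`, `n < N`:
`O₄O₅ − Re(M₄(x)M₅(y)) = N_t⁻¹ Σ m² (1 − cos 2π(mx − ny))`.
The hypotheses make every phase `mx − ny` with `m ≥ 1` nonnegative, so `1 − cos θ ≤ |θ|`
bounds each term linearly in the phase, and the resulting double sum is evaluated with the
formulas for `Σ m`, `Σ m²` and `Σ m³`.
-/

open Real

noncomputable section

section Faulhaber

variable {K : Type*} [Field K] [CharZero K]

theorem Finset.sum_range_cast_id (n : ℕ) :
    ∑ i ∈ Finset.range n, (i : K) = n * (n - 1) / 2 := by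
  induction n with
  | zero => simp
  | succ k ih => rw [Finset.sum_range_succ, ih]; push_cast; ring

theorem Finset.sum_range_cast_sq (n : ℕ) :
    ∑ i ∈ Finset.range n, (i : K) ^ 2 = n * (n - 1) * (2 * n - 1) / 6 := by
  induction n with
  | zero => simp
  | succ k ih => rw [Finset.sum_range_succ, ih]; push_cast; ring

theorem Finset.sum_range_cast_cube (n : ℕ) :
    ∑ i ∈ Finset.range n, (i : K) ^ 3 = (n * (n - 1)) ^ 2 / 4 := by
  induction n with
  | zero => simp
  | succ k ih => rw [Finset.sum_range_succ, ih]; push_cast; ring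

end Faulhaber

theorem Real.one_sub_cos_le_abs (θ : ℝ) : 1 - cos θ ≤ |θ| := by
  rcases le_or_gt |θ| 2 with hθ | hθ
  · have hcos := one_sub_sq_div_two_le_cos (x := θ)
    nlinarith [sq_abs θ, abs_nonneg θ]
  · linarith [neg_one_le_cos θ]

theorem one_sub_cos_two_pi_mul_le {t : ℝ} (ht : 0 ≤ t) :
    1 - cos (2 * π * t) ≤ 3 * π * t := by
  have h := one_sub_cos_le_abs (2 * π * t)
  rw [abs_of_nonneg (by positivity)] at h
  nlinarith [pi_pos]

theorem re_M₄_mul_M₅ (N Nt : ℕ) (x y : ℝ) :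
    (M₄ Nt x * M₅ N y).re = (Nt : ℝ)⁻¹ * ∑ m ∈ Finset.range Nt, ∑ n ∈ Finset.range N,
      (m : ℝ) ^ 2 * cos (2 * π * (m * x - n * y)) := by
  rw [M₄, M₅, mul_assoc, Finset.sum_mul_sum, ← Complex.ofReal_natCast, ← Complex.ofReal_inv,
    Complex.re_ofReal_mul, Complex.re_sum]
  congr 1
  refine Finset.sum_congr rfl fun m _ => ?_
  rw [Complex.re_sum]
  refine Finset.sum_congr rfl fun n _ => ?_
  rw [mul_assoc, ← Complex.exp_add,
    show 2 * (π : ℂ) * Complex.I * m * x + -(2 * π * Complex.I * n * y)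
      = ((2 * π * (m * x - n * y) : ℝ) : ℂ) * Complex.I by push_cast; ring,
    show (m : ℂ) ^ 2 = (((m : ℝ) ^ 2 : ℝ) : ℂ) by push_cast; ring,
    Complex.re_ofReal_mul, Complex.exp_ofReal_mul_I_re]

theorem O₄_mul_O₅ (N : ℕ) {Nt : ℕ} (hNt : Nt ≠ 0) :
    O₄ Nt * O₅ N
      = (Nt : ℝ)⁻¹ * ∑ m ∈ Finset.range Nt, ∑ _n ∈ Finset.range N, (m : ℝ) ^ 2 := by
  simp only [Finset.sum_const, Finset.card_range, nsmul_eq_mul, ← Finset.mul_sum,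
    Finset.sum_range_cast_sq, O₄, O₅]
  field_simp

theorem sq_mul_one_sub_cos_le {N m n : ℕ} {x y : ℝ} (hn : n < N) (hy : 0 ≤ y)
    (hxy : ((N : ℝ) - 1) * y ≤ x) :
    (m : ℝ) ^ 2 * (1 - cos (2 * π * (m * x - n * y)))
      ≤ 3 * π * ((m : ℝ) ^ 2 * (m * x - n * y)) := by
  rcases Nat.eq_zero_or_pos m with rfl | hm
  · simp
  have hn' : (n : ℝ) ≤ N - 1 := by
    rw [le_sub_iff_add_le]; exact_mod_cast hn
  have hm' : (1 : ℝ) ≤ m := by exact_mod_cast hm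
  have hphase : 0 ≤ (m : ℝ) * x - n * y := by
    have hny : (n : ℝ) * y ≤ x := (mul_le_mul_of_nonneg_right hn' hy).trans hxy
    nlinarith [mul_nonneg (Nat.cast_nonneg n) hy]
  have h := mul_le_mul_of_nonneg_left (one_sub_cos_two_pi_mul_le hphase) (sq_nonneg (m : ℝ))
  linarith

theorem sum_sum_sq_mul_sub (M N : ℕ) (x y : ℝ) :
    ∑ m ∈ Finset.range M, ∑ n ∈ Finset.range N, (m : ℝ) ^ 2 * (m * x - n * y)
      = N * x * (M * (M - 1)) ^ 2 / 4
        - y * (N * (N - 1) / 2) * (M * (M - 1) * (2 * M - 1) / 6) := by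
  have hsplit : ∀ m n : ℕ,
      (m : ℝ) ^ 2 * (m * x - n * y) = x * (m : ℝ) ^ 3 - y * (m : ℝ) ^ 2 * n := fun m n => by ring
  simp only [hsplit, Finset.sum_sub_distrib, Finset.sum_const, Finset.card_range, nsmul_eq_mul,
    ← Finset.mul_sum, ← Finset.sum_mul, Finset.sum_range_cast_id, Finset.sum_range_cast_sq,
    Finset.sum_range_cast_cube]
  ring

theorem O4O5_minus_re_M4M5_upper_bound_general
    (N Nt : ℕ) (hNt : 1 ≤ Nt) (x y : ℝ)
    (hy : 0 ≤ y) (hxy : ((N : ℝ) - 1) * y ≤ x) :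
    O₄ Nt * O₅ N - (M₄ Nt x * M₅ N y).re
      ≤ (3 * π / 4) * (N : ℝ) * (Nt : ℝ) * ((Nt : ℝ) - 1) ^ 2 * x
        - (π / 4) * (N : ℝ) * ((N : ℝ) - 1) * ((Nt : ℝ) - 1) * (2 * (Nt : ℝ) - 1) * y := by
  calc O₄ Nt * O₅ N - (M₄ Nt x * M₅ N y).re
      = (Nt : ℝ)⁻¹ * ∑ m ∈ Finset.range Nt, ∑ n ∈ Finset.range N,
          (m : ℝ) ^ 2 * (1 - cos (2 * π * (m * x - n * y))) := by
        simp only [O₄_mul_O₅ N (Nat.one_le_iff_ne_zero.mp hNt), re_M₄_mul_M₅, ← mul_sub,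
          ← Finset.sum_sub_distrib, mul_one_sub]
    _ ≤ (Nt : ℝ)⁻¹ * (3 * π * ∑ m ∈ Finset.range Nt, ∑ n ∈ Finset.range N,
          (m : ℝ) ^ 2 * (m * x - n * y)) := by
        refine mul_le_mul_of_nonneg_left ?_ (by positivity)
        rw [Finset.mul_sum]
        refine Finset.sum_le_sum fun m _ => ?_
        rw [Finset.mul_sum]
        exact Finset.sum_le_sum fun n hn =>
          sq_mul_one_sub_cos_le (Finset.mem_range.mp hn) hy hxy
    _ = _ := by
        rw [sum_sum_sq_mul_sub]
        field_simp
        ring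

/-- **Equation (51), Appendix D.** For `y ≥ 0` and `x ≥ (N−1)y`,
`O₄O₅ − Re(M₄(x)M₅(y)) ≤ (3π/4)N N_t(N_t−1)²x − (π/4)N(N−1)(N_t−1)(2N_t−1)y`. -/
theorem O4O5_minus_re_M4M5_upper_bound
    (N Nt : ℕ) (hN : 1 ≤ N) (hNt : 1 ≤ Nt) (x y : ℝ)
    (hy : 0 ≤ y) (hxy : ((N : ℝ) - 1) * y ≤ x) :
    O₄ Nt * O₅ N - (M₄ Nt x * M₅ N y).re
      ≤ (3 * π / 4) * (N : ℝ) * (Nt : ℝ) * ((Nt : ℝ) - 1) ^ 2 * x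
        - (π / 4) * (N : ℝ) * ((N : ℝ) - 1) * ((Nt : ℝ) - 1) * (2 * (Nt : ℝ) - 1) * y :=
  O4O5_minus_re_M4M5_upper_bound_general N Nt hNt x y hy hxy

end
end
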